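/- arXiv:0709.1149 — 6 statements merged into one kernel-verified Lean document; each statement's English description precedes it below -/
import Mathlib

section
/- For data tables with d = 2 and parameters (s, m), the worst-case minimal number of ontic states over all such data tables equals min{2^m, s}: (a) every d = 2 data table admits an ontological factorization with Ω = min{2^m, s} ontic states, and (b) there exists a d = 2 data table with parameters (s,m) for which every ontological factorization has Ω ≥ min{2^m, s}. -/
/-!
If `s ≤ 2^m`, take one ontic state per column. Otherwise take the `2^m` bit strings as ontic
states: column `k` is the product of independent Bernoulli bits with biases `T x k`, and
measurement `x` deterministically reads bit `x`.

Conversely, in any factorization of a `0/1` table, every ontic state in the support of column `k`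
must answer every measurement exactly as column `k` does. Hence pairwise distinct `0/1` columns
need pairwise distinct ontic states, and the binary expansions of `0, …, min (2^m) s - 1` give
`min (2^m) s` distinct columns.
-/

open Finset

/-- An ontological factorization over `Ω` ontic states of a `d = 2` data table encoded by its
first-outcome probability matrix `T ∈ [0,1]^{m×s}`. -/
def IsOF2 {m s : ℕ} (T : Matrix (Fin m) (Fin s) ℝ) (Ω : ℕ)
    (P : Matrix (Fin Ω) (Fin s) ℝ) (M : Fin m → Fin Ω → ℝ) : Prop :=
  (∀ j k, 0 ≤ P j k) ∧ (∀ k, ∑ j, P j k = 1) ∧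
  (∀ x j, 0 ≤ M x j ∧ M x j ≤ 1) ∧
  (∀ x k, ∑ j, M x j * P j k = T x k)

section BernoulliProduct

variable {ι : Type*} [Fintype ι]

def bernoulliProd (p : ι → ℝ) (b : ι → Bool) : ℝ := ∏ i, if b i then p i else 1 - p i

lemma bernoulliProd_nonneg {p : ι → ℝ} (hp : ∀ i, 0 ≤ p i ∧ p i ≤ 1) (b : ι → Bool) :
    0 ≤ bernoulliProd p b :=
  prod_nonneg fun i _ => by split <;> linarith [hp i]

variable [DecidableEq ι]

lemma sum_bernoulliProd (p : ι → ℝ) : ∑ b, bernoulliProd p b = 1 := by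
  simp only [bernoulliProd]
  simp [← Fintype.prod_sum fun i (t : Bool) => if t then p i else 1 - p i]

lemma sum_ite_mul_bernoulliProd (p : ι → ℝ) (i : ι) :
    ∑ b, (if b i then 1 else 0) * bernoulliProd p b = p i := by
  have factor : ∀ b : ι → Bool, (if b i then 1 else 0) * bernoulliProd p b =
      ∏ j, (if j = i then (if b j then 1 else 0) else 1) * (if b j then p j else 1 - p j) := by
    intro b
    rw [prod_mul_distrib, Fintype.prod_ite_eq', bernoulliProd]
  simp_rw [factor]
  rw [← Fintype.prod_sum fun j (t : Bool) =>
      (if j = i then (if t then 1 else 0) else 1) * (if t then p j else 1 - p j)]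
  rw [Fintype.prod_eq_single i fun j hj => by simp [hj]]
  simp

end BernoulliProduct

lemma eq_zero_of_sum_mul_eq_zero {ι : Type*} [Fintype ι] {a p : ι → ℝ} (ha : ∀ j, 0 ≤ a j)
    (hp : ∀ j, 0 ≤ p j) (hsum : ∑ j, a j * p j = 0) {j : ι} (hj : 0 < p j) : a j = 0 :=
  (mul_eq_zero.mp ((sum_eq_zero_iff_of_nonneg fun i _ => mul_nonneg (ha i) (hp i)).mp hsum j
    (mem_univ j))).resolve_right hj.ne'

section Factorization

variable {m s Ω : ℕ} {T : Matrix (Fin m) (Fin s) ℝ}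

lemma exists_isOF2_of_equiv_fin (e : Fin Ω ≃ Fin s) (hT : ∀ x k, 0 ≤ T x k ∧ T x k ≤ 1) :
    ∃ (P : Matrix (Fin Ω) (Fin s) ℝ) (M : Fin m → Fin Ω → ℝ), IsOF2 T Ω P M :=
  ⟨fun j k => if e j = k then 1 else 0, fun x j => T x (e j),
    fun j k => ite_nonneg zero_le_one le_rfl, fun k => by simp [← Equiv.eq_symm_apply],
    fun x j => hT x (e j), fun x k => by simp [← Equiv.eq_symm_apply]⟩

lemma exists_isOF2_of_equiv_bool (e : (Fin m → Bool) ≃ Fin Ω)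
    (hT : ∀ x k, 0 ≤ T x k ∧ T x k ≤ 1) :
    ∃ (P : Matrix (Fin Ω) (Fin s) ℝ) (M : Fin m → Fin Ω → ℝ), IsOF2 T Ω P M :=
  ⟨fun j k => bernoulliProd (T · k) (e.symm j), fun x j => if e.symm j x then 1 else 0,
    fun j k => bernoulliProd_nonneg (fun x => hT x k) _,
    fun k => by rw [e.symm.sum_comp (fun b => bernoulliProd (T · k) b), sum_bernoulliProd],
    fun x j => by dsimp only; split <;> norm_num,
    fun x k => by
      rw [e.symm.sum_comp (fun b => (if b x then 1 else 0) * bernoulliProd (T · k) b),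
        sum_ite_mul_bernoulliProd]⟩

variable {P : Matrix (Fin Ω) (Fin s) ℝ} {M : Fin m → Fin Ω → ℝ}

lemma IsOF2.exists_pos (h : IsOF2 T Ω P M) (k : Fin s) : ∃ j, 0 < P j k := by
  by_contra! hP
  have : ∑ j, P j k = 0 := sum_eq_zero fun j _ => le_antisymm (hP j) (h.1 j k)
  simp [h.2.1 k] at this

lemma IsOF2.apply_eq_of_pos (h : IsOF2 T Ω P M) {x : Fin m} {j : Fin Ω} {k : Fin s}
    (hj : 0 < P j k) (hT : T x k = 0 ∨ T x k = 1) : M x j = T x k := by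
  obtain ⟨hP, hP1, hM, hMP⟩ := h
  rcases hT with h0 | h1
  · rw [h0]
    exact eq_zero_of_sum_mul_eq_zero (fun i => (hM x i).1) (hP · k) (by rw [hMP, h0]) hj
  · have hsum : ∑ i, (1 - M x i) * P i k = 0 := by
      simp only [sub_mul, one_mul, sum_sub_distrib, hP1, hMP, h1, sub_self]
    have hMj := eq_zero_of_sum_mul_eq_zero (fun i => sub_nonneg.2 (hM x i).2) (hP · k) hsum hj
    rw [h1]; linarith

lemma IsOF2.card_le_of_injective (h : IsOF2 T Ω P M) (hT : ∀ x k, T x k = 0 ∨ T x k = 1)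
    {ι : Type*} [Fintype ι] {g : ι → Fin s} (hg : Function.Injective fun a x => T x (g a)) :
    Fintype.card ι ≤ Ω := by
  choose f hf using h.exists_pos
  have hfg : Function.Injective (f ∘ g) := fun a b hab => hg <| funext fun x =>
    calc T x (g a) = M x (f (g a)) := (h.apply_eq_of_pos (hf (g a)) (hT x _)).symm
      _ = M x (f (g b)) := congrArg (M x) hab
      _ = T x (g b) := h.apply_eq_of_pos (hf (g b)) (hT x _)
  simpa using Fintype.card_le_of_injective _ hfg

end Factorization

def bitTable (m s : ℕ) : Matrix (Fin m) (Fin s) ℝ :=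
  fun x k => if k.val.testBit x then 1 else 0

lemma bitTable_eq_zero_or_eq_one (m s : ℕ) (x : Fin m) (k : Fin s) :
    bitTable m s x k = 0 ∨ bitTable m s x k = 1 :=
  (ite_eq_or_eq _ _ _).symm

lemma eq_of_testBit_eq_of_lt_two_pow {a b m : ℕ} (ha : a < 2 ^ m) (hb : b < 2 ^ m)
    (hab : ∀ i < m, a.testBit i = b.testBit i) : a = b := by
  refine Nat.eq_of_testBit_eq fun i => ?_
  rcases lt_or_ge i m with hi | hi
  · exact hab i hi
  · have hpow := Nat.pow_le_pow_right two_pos hi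
    rw [Nat.testBit_lt_two_pow (ha.trans_le hpow), Nat.testBit_lt_two_pow (hb.trans_le hpow)]

lemma bitTable_castLE_injective {m s n : ℕ} (hn : n ≤ 2 ^ m) (hns : n ≤ s) :
    Function.Injective fun (a : Fin n) x => bitTable m s x (Fin.castLE hns a) := by
  intro a b hab
  refine Fin.ext <| eq_of_testBit_eq_of_lt_two_pow (a.2.trans_le hn) (b.2.trans_le hn)
    fun i hi => ?_
  have := congrFun hab ⟨i, hi⟩
  simp only [bitTable, Fin.val_castLE] at this
  by_cases ha : a.val.testBit i <;> by_cases hb : b.val.testBit i <;> simp_all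

/-- For `d = 2` data tables with parameters `(s, m)`, the worst-case minimal number of ontic
states equals `min {2^m, s}`: every such table has an ontological factorization with
`Ω = min (2^m) s`, and some table requires `Ω ≥ min (2^m) s` in every factorization. -/
theorem stmt_6 (s m : ℕ) :
    (∀ T : Matrix (Fin m) (Fin s) ℝ, (∀ x k, 0 ≤ T x k ∧ T x k ≤ 1) →
      ∃ (P : Matrix (Fin (min (2 ^ m) s)) (Fin s) ℝ)
        (M : Fin m → Fin (min (2 ^ m) s) → ℝ), IsOF2 T (min (2 ^ m) s) P M) ∧
    (∃ T : Matrix (Fin m) (Fin s) ℝ, (∀ x k, 0 ≤ T x k ∧ T x k ≤ 1) ∧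
      ∀ (Ω : ℕ) (P : Matrix (Fin Ω) (Fin s) ℝ) (M : Fin m → Fin Ω → ℝ),
        IsOF2 T Ω P M → min (2 ^ m) s ≤ Ω) := by
  refine ⟨fun T hT => ?_, ⟨bitTable m s, fun x k => ?_, fun Ω P M h => ?_⟩⟩
  · rcases le_total s (2 ^ m) with h | h
    · exact exists_isOF2_of_equiv_fin (finCongr (min_eq_right h)) hT
    · exact exists_isOF2_of_equiv_bool (Fintype.equivFinOfCardEq (by simp [min_eq_left h])) hT
  · rcases bitTable_eq_zero_or_eq_one m s x k with h | h <;> simp [h]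
  · simpa using h.card_le_of_injective (bitTable_eq_zero_or_eq_one m s)
      (bitTable_castLE_injective (min_le_left _ _) (min_le_right _ _))
end

section
/- If all entries of a data table D are rational numbers, then D admits a deterministic ontological factorization over a finite number of ontic states: there exist finite Ω, a column-stochastic Ω×s matrix P with rational entries, and column-stochastic 0/1 matrices M^(x) with M^(x)P = D^(x) for all x. -/
/-!
Take as ontic states the functions `f : Fin m → Fin d` assigning an outcome to every measurement.
Preparation `k` puts the product weight `∏ x, D x (f x) k` on `f`, and measurement `x` reads off the
outcome `f x`. Since every column of every `D x` sums to one, these weights form a distribution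
whose marginal on the `x`-th coordinate is the `k`-th column of `D x`; they are rational whenever
the entries of `D` are.
-/

open Finset

/-- A matrix is column-stochastic: nonnegative entries and each column sums to 1. -/
def ColStoch {R C : Type*} [Fintype R] (A : Matrix R C ℝ) : Prop :=
  (∀ i j, 0 ≤ A i j) ∧ ∀ j, ∑ i, A i j = 1

section ProductDistribution

variable {X R S : Type*} [Fintype X] [DecidableEq X] [Fintype R] [CommSemiring S]

theorem sum_prod_eq_one {g : X → R → S} (hg : ∀ x, ∑ i, g x i = 1) :
    ∑ f : X → R, ∏ x, g x (f x) = 1 := by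
  rw [← Fintype.prod_sum, Fintype.prod_eq_one _ hg]

theorem sum_ite_apply_eq_mul_prod [DecidableEq R] {g : X → R → S} (hg : ∀ x, ∑ i, g x i = 1)
    (x : X) (i : R) :
    ∑ f : X → R, (if f x = i then 1 else 0) * ∏ y, g y (f y) = g x i := by
  set h : X → R → S := Function.update g x (Pi.single i (g x i))
  have h_compl : ∀ y ∈ ({x}ᶜ : Finset X), h y = g y := fun y hy =>
    Function.update_of_ne (by simpa using hy) _ _
  have h_prod : ∀ f : X → R, (if f x = i then 1 else 0) * ∏ y, g y (f y) = ∏ y, h y (f y) := by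
    intro f
    rw [Fintype.prod_eq_mul_prod_compl x, Fintype.prod_eq_mul_prod_compl x (fun y => h y (f y)),
      Finset.prod_congr rfl fun y hy => congrFun (h_compl y hy) (f y)]
    by_cases hfx : f x = i <;> simp [h, hfx]
  rw [Fintype.sum_congr _ _ h_prod, ← Fintype.prod_sum, Fintype.prod_eq_mul_prod_compl x,
    Finset.prod_congr rfl fun y hy => by rw [h_compl y hy, hg y]]
  simp [h]

end ProductDistribution

section ColStoch

variable {X R C Ω : Type*} [Fintype R]

theorem ColStoch.submatrix_equiv_left [Fintype Ω] {A : Matrix R C ℝ} (hA : ColStoch A)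
    (e : Ω ≃ R) : ColStoch (A.submatrix e id) :=
  ⟨fun _ _ => hA.1 _ _, fun j => (e.sum_comp (A · j)).trans (hA.2 j)⟩

theorem ColStoch.submatrix_right {A : Matrix R C ℝ} (hA : ColStoch A) (f : Ω → C) :
    ColStoch (A.submatrix id f) :=
  ⟨fun _ _ => hA.1 _ _, fun j => hA.2 (f j)⟩

def productTable [Fintype X] (D : X → Matrix R C ℝ) : Matrix (X → R) C ℝ :=
  Matrix.of fun f k => ∏ x, D x (f x) k

def evalTable [DecidableEq R] (x : X) : Matrix R (X → R) ℝ :=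
  Matrix.of fun i f => if f x = i then 1 else 0

theorem colStoch_productTable [Fintype X] [DecidableEq X] {D : X → Matrix R C ℝ}
    (hD : ∀ x, ColStoch (D x)) : ColStoch (productTable D) :=
  ⟨fun _ k => prod_nonneg fun x _ => (hD x).1 _ k,
    fun k => sum_prod_eq_one fun x => (hD x).2 k⟩

theorem colStoch_evalTable [DecidableEq R] (x : X) : ColStoch (evalTable (R := R) x) :=
  ⟨fun i f => by simp only [evalTable, Matrix.of_apply]; split_ifs <;> norm_num,
    fun f => by simp [evalTable]⟩

omit [Fintype R] in
theorem evalTable_apply_eq_zero_or_one [DecidableEq R] (x : X) (i : R) (f : X → R) :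
    evalTable x i f = 0 ∨ evalTable x i f = 1 := by
  simp only [evalTable, Matrix.of_apply]
  split_ifs <;> simp

theorem evalTable_mul_productTable [Fintype X] [DecidableEq X] [DecidableEq R]
    {D : X → Matrix R C ℝ} (hD : ∀ x, ColStoch (D x)) (x : X) :
    evalTable x * productTable D = D x := by
  ext i k
  exact sum_ite_apply_eq_mul_prod (fun y => (hD y).2 k) x i

end ColStoch

/-- If all entries of a data table are rational, it admits a deterministic ontological
factorization over a finite number of ontic states. -/
theorem stmt_9 (s d m : ℕ) (D : Fin m → Matrix (Fin d) (Fin s) ℝ)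
    (hD : ∀ x, ColStoch (D x))
    (hrat : ∀ x i k, ∃ q : ℚ, D x i k = (q : ℝ)) :
    ∃ (Ω : ℕ) (P : Matrix (Fin Ω) (Fin s) ℝ) (M : Fin m → Matrix (Fin d) (Fin Ω) ℝ),
      ColStoch P ∧ (∀ j k, ∃ q : ℚ, P j k = (q : ℝ)) ∧
      (∀ x, ColStoch (M x)) ∧
      (∀ x i j, M x i j = 0 ∨ M x i j = 1) ∧
      (∀ x, M x * P = D x) := by
  choose q hq using hrat
  let e := (Fintype.equivFin (Fin m → Fin d)).symm
  refine ⟨_, (productTable D).submatrix e id, fun x => (evalTable x).submatrix id e,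
    (colStoch_productTable hD).submatrix_equiv_left e, fun j k => ?_,
    fun x => (colStoch_evalTable x).submatrix_right e,
    fun x i j => evalTable_apply_eq_zero_or_one x i (e j), fun x => ?_⟩
  · exact ⟨∏ y, q y (e j y) k, by simp [productTable, hq]⟩
  · rw [Matrix.submatrix_mul_equiv, Matrix.submatrix_id_id]
    exact evalTable_mul_productTable hD x
end

section
/- The 6×6 qubit data table D (with 2×2 identity diagonal blocks and uniform 1/2 off-diagonal blocks, for X,Y,Z measurements on X,Y,Z eigenstates) has rank 4. Hence any ontological factorization of D requires Ω ≥ 4 ontic states. -/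
/-!
Rank 4 is read off from two certificates: every odd row of `Dqubit` is the all-ones row minus
the even row of its block, which factors `Dqubit` through `Fin 4`, and the principal minor on
rows and columns `0, 1, 2, 4` equals `1 / 4`. A factorization `Dqubit = M * P` through `Fin Ω`
bounds the rank by `Ω`.
-/

open Finset

/-- The 6×6 qubit data table: 2×2 identity diagonal blocks, uniform 1/2 off-diagonal blocks. -/
noncomputable def Dqubit : Matrix (Fin 6) (Fin 6) ℝ := fun i j =>
  if (i : ℕ) / 2 = (j : ℕ) / 2 then (if i = j then 1 else 0) else 1/2

namespace Matrix

variable {m n k R : Type*} [Fintype n]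

theorem rank_mul_le_card_inner {o : Type*} [Fintype o] [CommSemiring R] [StrongRankCondition R]
    (A : Matrix m n R) (B : Matrix n o R) : (A * B).rank ≤ Fintype.card n :=
  (rank_mul_le_left A B).trans A.rank_le_card_width

theorem card_le_rank_of_det_submatrix_ne_zero [Fintype k] [DecidableEq k] [Field R]
    (A : Matrix m n R) (r : k → m) (c : k → n) (h : (A.submatrix r c).det ≠ 0) :
    Fintype.card k ≤ A.rank := by
  rw [← rank_of_isUnit _ ((isUnit_iff_isUnit_det _).mpr h.isUnit)]
  exact rank_submatrix_le A r c

end Matrix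

theorem Dqubit_eq_mul :
    Dqubit =
      (!![1, 0, 0, 0; -1, 0, 0, 1; 0, 1, 0, 0; 0, -1, 0, 1; 0, 0, 1, 0; 0, 0, -1, 1] :
        Matrix (Fin 6) (Fin 4) ℝ) *
      (!![1, 0, 1/2, 1/2, 1/2, 1/2; 1/2, 1/2, 1, 0, 1/2, 1/2; 1/2, 1/2, 1/2, 1/2, 1, 0;
        1, 1, 1, 1, 1, 1] : Matrix (Fin 4) (Fin 6) ℝ) := by
  ext i j
  fin_cases i <;> fin_cases j <;> norm_num [Dqubit, Matrix.mul_apply, Fin.sum_univ_succ]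

theorem Dqubit_submatrix : Dqubit.submatrix ![0, 1, 2, 4] ![0, 1, 2, 4] =
    !![1, 0, 1/2, 1/2; 0, 1, 1/2, 1/2; 1/2, 1/2, 1, 1/2; 1/2, 1/2, 1/2, 1] := by
  ext i j
  fin_cases i <;> fin_cases j <;> simp [Dqubit]

theorem det_Dqubit_submatrix : (Dqubit.submatrix ![0, 1, 2, 4] ![0, 1, 2, 4]).det = 1 / 4 := by
  rw [Dqubit_submatrix]
  simp [Matrix.det_succ_row_zero, Fin.sum_univ_succ, Fin.succAbove]
  norm_num

theorem Dqubit_rank : Dqubit.rank = 4 := by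
  apply le_antisymm
  · rw [Dqubit_eq_mul]
    exact (Matrix.rank_mul_le_card_inner _ _).trans_eq (Fintype.card_fin 4)
  · simpa using Dqubit.card_le_rank_of_det_submatrix_ne_zero ![0, 1, 2, 4] ![0, 1, 2, 4]
      (by rw [det_Dqubit_submatrix]; norm_num)

/-- The qubit X,Y,Z data table has rank 4, so any ontological factorization of it requires
at least 4 ontic states. -/
theorem stmt_11 :
    Dqubit.rank = 4 ∧
    ∀ (Ω : ℕ) (M : Matrix (Fin 6) (Fin Ω) ℝ) (P : Matrix (Fin Ω) (Fin 6) ℝ),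
      (∀ i j, 0 ≤ M i j ∧ M i j ≤ 1) →
      (∀ j k, 0 ≤ P j k) → (∀ k, ∑ j, P j k = 1) →
      (∀ (j : Fin Ω) (a : Fin 3),
        M ⟨2 * a.val, by have := a.isLt; omega⟩ j
          + M ⟨2 * a.val + 1, by have := a.isLt; omega⟩ j = 1) →
      Dqubit = M * P →
      4 ≤ Ω := by
  refine ⟨Dqubit_rank, fun Ω M P _ _ _ _ hMP => ?_⟩
  calc 4 = (M * P).rank := by rw [← hMP, Dqubit_rank]
    _ ≤ Ω := (Matrix.rank_mul_le_card_inner M P).trans_eq (Fintype.card_fin Ω)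
end

section
/- Kochen–Specker obstruction for the Kernaghan set: there is no assignment f: {1,...,20} → {0,1} of truth values to the 20 Kernaghan vectors in R^4 such that for each of the 11 four-element measurement sets {a,b,c,d} listed in the Kernaghan table, exactly one of f(a), f(b), f(c), f(d) equals 1. -/
open Finset

/-- The 11 four-element Kernaghan measurements, as columns of indices into the 20 vectors
(0-based indexing). -/
def kernaghan : Fin 11 → Fin 4 → Fin 20 :=
  ![![0,1,2,3], ![0,1,4,5], ![0,2,7,9], ![0,3,13,14],
    ![16,17,18,19], ![16,18,8,9], ![17,18,13,15], ![18,19,4,6],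
    ![14,15,10,11], ![5,6,10,12], ![8,7,12,11]]

/- Counting the incidences `(c, r)` with `f (m c r) = true` in two ways: by measurement it gives
one per measurement, so an odd total; by vector it is a sum of incidence counts, all even. -/
theorem not_exists_exactlyOne_true_of_odd_of_even_incidence {ι κ V : Type*} [Fintype ι]
    [Fintype κ] [DecidableEq V] (m : ι → κ → V) (hι : Odd (Fintype.card ι))
    (hm : ∀ v, Even #{p : ι × κ | m p.1 p.2 = v}) :
    ¬ ∃ f : V → Bool, ∀ c, #{r | f (m c r) = true} = 1 := by
  rintro ⟨f, hf⟩
  set trueIncidences : Finset (ι × κ) := {p | f (m p.1 p.2) = true}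
  have by_measurement : #trueIncidences = Fintype.card ι := by
    simp only [trueIncidences, card_filter, Fintype.sum_prod_type]
    simp only [← card_filter, hf, sum_const, smul_eq_mul, mul_one, card_univ]
  have by_vector : Even #trueIncidences := by
    rw [card_eq_sum_card_image (fun p : ι × κ => m p.1 p.2)]
    refine even_sum _ fun v hv => ?_
    obtain ⟨p, hp, rfl⟩ := mem_image.mp hv
    have hfp : f (m p.1 p.2) = true := (mem_filter_univ p).mp hp
    convert hm (m p.1 p.2) using 2
    congr 1
    ext q
    simp only [trueIncidences, mem_filter, mem_univ, true_and]
    exact ⟨And.right, fun hq => ⟨hq ▸ hfp, hq⟩⟩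
  exact (Nat.not_even_iff_odd.mpr hι) (by_measurement ▸ by_vector)

theorem kernaghan_incidence_even (v : Fin 20) :
    Even #{p : Fin 11 × Fin 4 | kernaghan p.1 p.2 = v} := by
  revert v
  decide

/-- Kochen–Specker obstruction for the Kernaghan set: there is no 0/1 truth-value assignment
to the 20 vectors giving exactly one `1` in each of the 11 measurements. -/
theorem stmt_15 :
    ¬ ∃ f : Fin 20 → Bool,
      ∀ c : Fin 11, (univ.filter (fun r : Fin 4 => f (kernaghan c r) = true)).card = 1 :=
  not_exists_exactlyOne_true_of_odd_of_even_incidence kernaghan (by decide)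
    kernaghan_incidence_even
end

section
/- Each of the 20 indices 1,...,20 appears an even number of times in the Kernaghan 4×11 measurement index table, while the number of measurements (11) is odd; hence the total number of incidences assigned truth value 1 under any assignment giving exactly one 1 per measurement is odd, contradicting its evenness. Formally: for any f: Fin 20 → Bool, ∑ over the 11 columns of (number of entries a in that column with f(a) = true) ≡ 0 (mod 2) whenever counted via index multiplicities, so it cannot equal 11. -/
/-!
Count the `true` incidences of the table by index instead of by column: every index occurs an
even number of times, so the count is a sum of even numbers. One `true` per column would make
it 11, which is odd.
-/

open Finset

section Table

variable {ι κ α : Type*} [Fintype ι] [Fintype κ] (T : ι → κ → α)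

theorem sum_card_filter_eq_card_filter_prod (P : α → Prop) [DecidablePred P] :
    ∑ c, #{r | P (T c r)} = #{p : ι × κ | P (T p.1 p.2)} := by
  simp only [card_filter, Fintype.sum_prod_type]

theorem even_sum_card_filter_of_even_card_fiber [Fintype α] [DecidableEq α]
    (hT : ∀ a, Even #{p : ι × κ | T p.1 p.2 = a}) (P : α → Prop) [DecidablePred P] :
    Even (∑ c, #{r | P (T c r)}) := by
  rw [sum_card_filter_eq_card_filter_prod,
    card_eq_sum_card_fiberwise (t := {a | P a}) fun p hp => by simpa using hp]
  refine even_sum _ fun a ha => ?_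
  rw [filter_filter, filter_congr fun p _ => and_iff_right_of_imp fun h : T p.1 p.2 = a =>
    h ▸ (mem_filter.mp ha).2]
  convert hT a

end Table

theorem even_card_kernaghan_fiber (a : Fin 20) :
    Even #{p : Fin 11 × Fin 4 | kernaghan p.1 p.2 = a} := by
  revert a
  decide

/-- The parity argument: each of the 20 indices occurs an even number of times in the
Kernaghan table, so for any truth assignment `f` the total number of `true` incidences over
the 11 measurements is even — in particular it cannot equal 11 (one per measurement). -/
theorem stmt_16 :
    (∀ a : Fin 20,
      Even ((univ.filter (fun p : Fin 11 × Fin 4 => kernaghan p.1 p.2 = a)).card)) ∧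
    ∀ f : Fin 20 → Bool,
      Even (∑ c : Fin 11, (univ.filter (fun r : Fin 4 => f (kernaghan c r) = true)).card) ∧
      (∑ c : Fin 11, (univ.filter (fun r : Fin 4 => f (kernaghan c r) = true)).card) ≠ 11 := by
  refine ⟨even_card_kernaghan_fiber, fun f => ?_⟩
  have heven := even_sum_card_filter_of_even_card_fiber kernaghan even_card_kernaghan_fiber
    (fun a => f a = true)
  refine ⟨heven, fun h11 => ?_⟩
  rw [h11] at heven
  exact absurd heven (by decide)
end

section
/- Any family of data tables containing, for each n, a sub-table of the binary-string form (d = 2, with 2^n preparations realizing all n-bit strings of deterministic outcomes over n two-outcome measurements) cannot be ontologically factorized with Ω growing polynomially in n: every ontological factorization of the n-th table requires Ω ≥ 2^n. -/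
/-! Every preparation `k` has some ontic state `j` in its support. Since the first-outcome
probability `T x k` is an average of the response values `M x j ∈ [0, 1]` over that support,
a deterministic entry `T x k ∈ {0, 1}` forces `M x j = T x k`. Hence the column of `k` can be
read off any ontic state in its support, so distinct columns have disjoint supports and a
table with `s` distinct deterministic columns needs at least `s` ontic states. The
binary-string table has `2 ^ n` such columns. -/

open Finset

/-- The `n`-th binary-string table: `2^n` preparations realizing all `n`-bit strings of
deterministic outcomes over `n` two-outcome measurements. -/
noncomputable def binTable (n : ℕ) : Matrix (Fin n) (Fin (2 ^ n)) ℝ :=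
  fun x k => if (k : ℕ).testBit (x : ℕ) then 1 else 0

open scoped Matrix

namespace IsOF2

variable {m s Ω : ℕ} {T : Matrix (Fin m) (Fin s) ℝ} {P : Matrix (Fin Ω) (Fin s) ℝ}
  {M : Fin m → Fin Ω → ℝ}

lemma exists_pos_s19 (h : IsOF2 T Ω P M) (k : Fin s) : ∃ j, 0 < P j k := by
  by_contra! hle
  have hzero : ∑ j, P j k = 0 :=
    sum_eq_zero fun j _ => le_antisymm (hle j) (h.1 j k)
  simp [h.2.1 k] at hzero

lemma response_eq_zero_of_pos (h : IsOF2 T Ω P M) {x : Fin m} {j : Fin Ω} {k : Fin s}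
    (hT : T x k = 0) (hj : 0 < P j k) : M x j = 0 := by
  have hsum : ∑ i, M x i * P i k = 0 := (h.2.2.2 x k).trans hT
  have hterm : M x j * P j k = 0 :=
    (sum_eq_zero_iff_of_nonneg fun i _ => mul_nonneg (h.2.2.1 x i).1 (h.1 i k)).mp hsum j
      (mem_univ j)
  exact (mul_eq_zero.mp hterm).resolve_right hj.ne'

lemma response_eq_one_of_pos (h : IsOF2 T Ω P M) {x : Fin m} {j : Fin Ω} {k : Fin s}
    (hT : T x k = 1) (hj : 0 < P j k) : M x j = 1 := by
  have hsum : ∑ i, (1 - M x i) * P i k = 0 := by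
    simp only [sub_mul, one_mul, sum_sub_distrib, h.2.1 k, h.2.2.2 x k, hT, sub_self]
  have hterm : (1 - M x j) * P j k = 0 :=
    (sum_eq_zero_iff_of_nonneg fun i _ =>
      mul_nonneg (sub_nonneg.mpr (h.2.2.1 x i).2) (h.1 i k)).mp hsum j (mem_univ j)
  linarith [(mul_eq_zero.mp hterm).resolve_right hj.ne']

lemma response_eq_of_pos (h : IsOF2 T Ω P M) {x : Fin m} {j : Fin Ω} {k : Fin s}
    (hT : T x k = 0 ∨ T x k = 1) (hj : 0 < P j k) : M x j = T x k := by
  rcases hT with hT | hT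
  · rw [hT, h.response_eq_zero_of_pos hT hj]
  · rw [hT, h.response_eq_one_of_pos hT hj]

lemma card_le (h : IsOF2 T Ω P M) (hdet : ∀ x k, T x k = 0 ∨ T x k = 1)
    (hcols : Function.Injective Tᵀ) : s ≤ Ω := by
  choose supp hsupp using h.exists_pos_s19
  have hinj : Function.Injective supp := fun k k' hkk' => hcols <| funext fun x => by
    simp only [Matrix.transpose_apply]
    rw [← h.response_eq_of_pos (hdet x k) (hsupp k),
      ← h.response_eq_of_pos (hdet x k') (hsupp k'), hkk']
  simpa using Fintype.card_le_of_injective supp hinj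

end IsOF2

lemma binTable_eq_zero_or_one (n : ℕ) (x : Fin n) (k : Fin (2 ^ n)) :
    binTable n x k = 0 ∨ binTable n x k = 1 := by
  unfold binTable
  split_ifs <;> simp

lemma binTable_transpose_injective (n : ℕ) : Function.Injective (binTable n)ᵀ := by
  intro k k' hkk'
  refine Fin.ext (Nat.eq_of_testBit_eq fun i => ?_)
  by_cases hi : i < n
  · have hx := congrFun hkk' ⟨i, hi⟩
    simp only [Matrix.transpose_apply, binTable] at hx
    by_cases hb : (k : ℕ).testBit i <;> by_cases hb' : (k' : ℕ).testBit i <;> simp_all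
  · have hle : 2 ^ n ≤ 2 ^ i := Nat.pow_le_pow_right two_pos (not_lt.mp hi)
    rw [Nat.testBit_lt_two_pow (k.2.trans_le hle), Nat.testBit_lt_two_pow (k'.2.trans_le hle)]

lemma exists_mul_pow_lt_two_pow (C k : ℕ) : ∃ n : ℕ, C * n ^ k < 2 ^ n := by
  have hlim := (tendsto_pow_const_div_const_pow_of_one_lt k one_lt_two).const_mul (C : ℝ)
  rw [mul_zero] at hlim
  obtain ⟨n, hn⟩ := (hlim.eventually (gt_mem_nhds one_pos)).exists
  rw [← mul_div_assoc, div_lt_one (by positivity)] at hn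
  exact ⟨n, by exact_mod_cast hn⟩

/-- Any family of ontological factorizations of the binary-string tables must have
`Ω n ≥ 2^n`; in particular `Ω` cannot grow polynomially in `n`. -/
theorem stmt_19 (Ωf : ℕ → ℕ)
    (hOF : ∀ n, ∃ (P : Matrix (Fin (Ωf n)) (Fin (2 ^ n)) ℝ) (M : Fin n → Fin (Ωf n) → ℝ),
      IsOF2 (binTable n) (Ωf n) P M) :
    (∀ n, 2 ^ n ≤ Ωf n) ∧ ¬ ∃ C k : ℕ, ∀ n, Ωf n ≤ C * n ^ k := by
  have hge : ∀ n, 2 ^ n ≤ Ωf n := fun n => by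
    obtain ⟨P, M, h⟩ := hOF n
    exact h.card_le (binTable_eq_zero_or_one n) (binTable_transpose_injective n)
  refine ⟨hge, fun ⟨C, k, hpoly⟩ => ?_⟩
  obtain ⟨n, hn⟩ := exists_mul_pow_lt_two_pow C k
  exact (hn.trans_le (hge n)).not_ge (hpoly n)
end
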